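/- arXiv:2411.14376 — 2 statements merged into one kernel-verified Lean document; each statement's English description precedes it below -/
import Mathlib

section
/- The area integrand F(M) = √det(Iₙ + MᵀM) is strictly convex on a neighborhood of the origin in ℝ^{m×n}: there exists c = c(n,m) > 0 such that the Hessian D²F(M) is positive definite for all |M| < c. -/
noncomputable section
open Matrix Polynomial

attribute [local instance] Matrix.normedAddCommGroup Matrix.normedSpace

variable {m n : ℕ}


lemma det_pos_aux (A : Matrix (Fin m) (Fin n) ℝ) : (0:ℝ) < (1 + Aᵀ * A).det := by
  have hs : (Aᵀ * A).PosSemidef := by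
    simpa using Matrix.posSemidef_conjTranspose_mul_self A
  exact (Matrix.PosDef.add_posSemidef Matrix.PosDef.one hs).det_pos

lemma contDiff_inner_det :
    ContDiff ℝ (⊤ : ℕ∞) (fun A : Matrix (Fin m) (Fin n) ℝ => (1 + Aᵀ * A).det) := by
  have h : (fun A : Matrix (Fin m) (Fin n) ℝ => (1 + Aᵀ * A).det)
      = fun A => ∑ σ : Equiv.Perm (Fin n),
          (Equiv.Perm.sign σ : ℝ) * ∏ i, ((1 + Aᵀ * A : Matrix (Fin n) (Fin n) ℝ) (σ i) i) := by
    funext A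
    simp [Matrix.det_apply, Units.smul_def, zsmul_eq_mul]
  rw [h]
  apply ContDiff.sum
  intro σ _
  apply ContDiff.mul contDiff_const
  apply contDiff_prod
  intro i _
  have : (fun A : Matrix (Fin m) (Fin n) ℝ => ((1 + Aᵀ * A : Matrix (Fin n) (Fin n) ℝ) (σ i) i))
      = fun A => (1 : Matrix (Fin n) (Fin n) ℝ) (σ i) i + ∑ k, A k (σ i) * A k i := by
    funext A
    simp [Matrix.add_apply, Matrix.mul_apply]
  rw [this]
  apply ContDiff.add contDiff_const
  exact ContDiff.sum fun k _ =>
    ((contDiff_pi.mp (contDiff_pi.mp contDiff_id k) (σ i))).mul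
      ((contDiff_pi.mp (contDiff_pi.mp contDiff_id k) i))

lemma contDiff_F :
    ContDiff ℝ (⊤ : ℕ∞) (fun A : Matrix (Fin m) (Fin n) ℝ => Real.sqrt (1 + Aᵀ * A).det) := by
  rw [contDiff_iff_contDiffAt]
  intro A
  exact (Real.contDiffAt_sqrt (det_pos_aux A).ne').comp A contDiff_inner_det.contDiffAt

lemma hessian_at_zero (V : Matrix (Fin m) (Fin n) ℝ) :
    fderiv ℝ (fderiv ℝ (fun A : Matrix (Fin m) (Fin n) ℝ => Real.sqrt (1 + Aᵀ * A).det)) 0 V V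
      = (Vᵀ * V).trace := by
  set F := fun A : Matrix (Fin m) (Fin n) ℝ => Real.sqrt (1 + Aᵀ * A).det with hFdef
  have hF : ContDiff ℝ (⊤ : ℕ∞) F := contDiff_F
  set B := Vᵀ * V with hB
  set τ := B.trace with hτ
  set p : ℝ[X] := ((1 + (X : ℝ[X]) • B.map C).det).divX.divX with hp
  set Q : ℝ[X] := C 1 + C τ * X^2 + (p.comp (X^2)) * X^4 with hQ
  have hQeval : ∀ u : ℝ, Q.eval u = (1 + (u • V)ᵀ * (u • V)).det := by
    intro u
    have h1 : (u • V)ᵀ * (u • V) = (u^2) • B := by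
      rw [hB, Matrix.transpose_smul, Matrix.smul_mul, Matrix.mul_smul, smul_smul, pow_two]
    rw [h1, Matrix.det_one_add_smul, hQ, ← hp]
    simp only [eval_add, eval_mul, eval_pow, eval_C, eval_X, eval_comp, ← hτ]
    ring
  have hQpos : ∀ u : ℝ, 0 < Q.eval u := fun u => (hQeval u) ▸ det_pos_aux (u • V)
  set g : ℝ → ℝ := fun u => F (u • V) with hg
  have hgQ : g = fun u => Real.sqrt (Q.eval u) := by
    funext u; rw [hg, hFdef]; simp only []; rw [hQeval]
  have hline : ∀ t : ℝ, HasDerivAt (fun u : ℝ => u • V) V t := by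
    intro t
    have := (hasDerivAt_id t).smul_const V
    simp only [id, one_smul] at this
    exact this
  -- first derivative of g, explicit
  have hderiv_g : deriv g = fun t => (2 * Real.sqrt (Q.eval t))⁻¹ * Q.derivative.eval t := by
    funext t
    have h2 : HasDerivAt g ((2 * Real.sqrt (Q.eval t))⁻¹ * Q.derivative.eval t) t := by
      rw [hgQ]
      have := (Real.hasDerivAt_sqrt (hQpos t).ne').comp t (Q.hasDerivAt t)
      simp only [one_div] at this
      exact this
    exact h2.deriv
  -- second derivative of g at 0
  have hdd : deriv (deriv g) 0 = τ := by
    rw [hderiv_g]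
    have hsq : HasDerivAt (fun t : ℝ => Real.sqrt (Q.eval t))
        (1 / (2 * Real.sqrt (Q.eval 0)) * Q.derivative.eval 0) 0 :=
      (Real.hasDerivAt_sqrt (hQpos 0).ne').comp 0 (Q.hasDerivAt 0)
    have hpos0 : 0 < Real.sqrt (Q.eval 0) := Real.sqrt_pos.mpr (hQpos 0)
    have hne : (2 : ℝ) * Real.sqrt (Q.eval 0) ≠ 0 := by positivity
    have h1 := ((hsq.const_mul 2).inv hne)
    have h2 := Q.derivative.hasDerivAt (0 : ℝ)
    have h3 := h1.mul h2
    rw [show deriv (fun t => (2 * Real.sqrt (Q.eval t))⁻¹ * Q.derivative.eval t) 0 = _ from h3.deriv]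
    have e0 : Q.eval 0 = 1 := by rw [hQ]; simp
    have e1 : Q.derivative.eval 0 = 0 := by rw [hQ]; simp [Polynomial.derivative_mul]
    have e2 : Q.derivative.derivative.eval 0 = 2 * τ := by
      rw [hQ]; simp [Polynomial.derivative_mul]; ring
    rw [e0, e1, e2]
    simp [e0]
  -- identify with the Hessian
  have hFd := hF.fderiv_right (m := (⊤ : ℕ∞)) (by simp)
  have hΨ : ∀ t : ℝ, deriv g t = fderiv ℝ F (t • V) V := by
    intro t
    have hgc : g = F ∘ fun u : ℝ => u • V := rfl
    rw [hgc]
    exact (((hF.differentiable (by simp) (t • V)).hasFDerivAt).comp_hasDerivAt t (hline t)).deriv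
  set e := ContinuousLinearMap.apply ℝ ℝ V with he
  have hcomp : deriv g = fun t => e (fderiv ℝ F (t • V)) := by
    funext t; rw [hΨ t]; rfl
  have hd2 : deriv (deriv g) 0 = fderiv ℝ (fderiv ℝ F) 0 V V := by
    rw [hcomp]
    have hdiff : DifferentiableAt ℝ (fderiv ℝ F) ((0:ℝ) • V) := by
      rw [zero_smul]; exact (hFd.differentiable (by simp)).differentiableAt
    have hln := hline 0
    have hcd : HasDerivAt (fun t : ℝ => e (fderiv ℝ F (t • V)))
        ((e.comp (fderiv ℝ (fderiv ℝ F) ((0:ℝ) • V))) V) 0 := by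
      have h4 : HasFDerivAt (fun A => e (fderiv ℝ F A))
          (e.comp (fderiv ℝ (fderiv ℝ F) ((0:ℝ) • V))) ((0:ℝ) • V) :=
        e.hasFDerivAt.comp _ hdiff.hasFDerivAt
      exact h4.comp_hasDerivAt 0 hln
    rw [hcd.deriv]
    simp [he]
    rfl
  rw [← hd2, hdd, hτ]



lemma trace_pos_aux {V : Matrix (Fin m) (Fin n) ℝ} (hV : V ≠ 0) : 0 < (Vᵀ * V).trace := by
  have h : (Vᵀ * V).trace = ∑ i, ∑ k, V k i ^ 2 := by
    simp [Matrix.trace, Matrix.diag, Matrix.mul_apply, sq]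
  rw [h]
  obtain ⟨a, b, hab⟩ : ∃ a b, V a b ≠ 0 := by
    by_contra hc
    push_neg at hc
    exact hV (by ext a b; simp [hc a b])
  apply Finset.sum_pos'
  · exact fun i _ => Finset.sum_nonneg fun k _ => sq_nonneg _
  · exact ⟨b, Finset.mem_univ b, Finset.sum_pos'
      (fun k _ => sq_nonneg _) ⟨a, Finset.mem_univ a, by positivity⟩⟩

lemma norm_le_frob (M : Matrix (Fin m) (Fin n) ℝ) :
    ‖M‖ ≤ Real.sqrt (∑ α, ∑ i, M α i ^ 2) := by
  rw [Matrix.norm_le_iff (Real.sqrt_nonneg _)]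
  intro α
  intro i
  rw [Real.norm_eq_abs, ← Real.sqrt_sq_eq_abs]
  apply Real.sqrt_le_sqrt
  calc M α i ^ 2 ≤ ∑ j, M α j ^ 2 :=
        Finset.single_le_sum (f := fun j => M α j ^ 2) (fun j _ => sq_nonneg _) (Finset.mem_univ i)
    _ ≤ ∑ β, ∑ j, M β j ^ 2 :=
        Finset.single_le_sum (f := fun β => ∑ j, M β j ^ 2)
          (fun β _ => Finset.sum_nonneg fun j _ => sq_nonneg _) (Finset.mem_univ α)


/-- the area integrand `F(M) = √det(Iₙ + MᵀM)` is strictly convex near the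
origin: there is `c = c(n,m) > 0` such that the Hessian `D²F(M)` is positive definite
for all `M` with Frobenius norm `|M| < c`. -/
theorem area_integrand_strictly_convex_near_zero (m n : ℕ) :
    ∃ c : ℝ, 0 < c ∧
      ∀ M : Matrix (Fin m) (Fin n) ℝ,
        Real.sqrt (∑ α, ∑ i, M α i ^ 2) < c →
        ∀ V : Matrix (Fin m) (Fin n) ℝ, V ≠ 0 →
          0 < iteratedFDeriv ℝ 2
                (fun A : Matrix (Fin m) (Fin n) ℝ => Real.sqrt (1 + Aᵀ * A).det) M ![V, V] := by
  set F := fun A : Matrix (Fin m) (Fin n) ℝ => Real.sqrt (1 + Aᵀ * A).det with hF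
  have hFc : ContDiff ℝ (⊤ : ℕ∞) F := contDiff_F
  have hFd := hFc.fderiv_right (m := (⊤ : ℕ∞)) (by simp)
  have hcont : Continuous (fderiv ℝ (fderiv ℝ F)) := hFd.continuous_fderiv (by simp)
  set Φ : Matrix (Fin m) (Fin n) ℝ × Matrix (Fin m) (Fin n) ℝ → ℝ :=
    fun q => fderiv ℝ (fderiv ℝ F) q.1 q.2 q.2 with hΦ
  have hΦc : Continuous Φ := by
    exact ((hcont.comp continuous_fst).clm_apply continuous_snd).clm_apply continuous_snd
  haveI : ProperSpace (Matrix (Fin m) (Fin n) ℝ) := FiniteDimensional.proper ℝ _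
  have hK : IsCompact (Metric.sphere (0 : Matrix (Fin m) (Fin n) ℝ) 1) := isCompact_sphere 0 1
  have hsub : ({(0 : Matrix (Fin m) (Fin n) ℝ)} ×ˢ
      Metric.sphere (0 : Matrix (Fin m) (Fin n) ℝ) 1) ⊆ Φ ⁻¹' Set.Ioi 0 := by
    rintro ⟨M₀, W⟩ ⟨hM₀, hW⟩
    simp only [Set.mem_singleton_iff] at hM₀
    have hWne : W ≠ 0 := by
      intro h
      rw [Metric.mem_sphere, h] at hW
      simp at hW
    simp only [Set.mem_preimage, Set.mem_Ioi, hΦ, hM₀]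
    rw [hessian_at_zero]
    exact trace_pos_aux hWne
  obtain ⟨u, v, hu, hv, h0u, hKv, huv⟩ :=
    generalized_tube_lemma isCompact_singleton hK (isOpen_Ioi.preimage hΦc) hsub
  obtain ⟨c, hc, hball⟩ := Metric.isOpen_iff.mp hu 0 (h0u rfl)
  refine ⟨c, hc, fun M hM V hV => ?_⟩
  have hMu : M ∈ u := hball (by simpa [Metric.mem_ball] using lt_of_le_of_lt (norm_le_frob M) hM)
  set a := ‖V‖ with ha
  have hane : a ≠ 0 := norm_ne_zero_iff.mpr hV
  have hapos : 0 < a := norm_pos_iff.mpr hV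
  set W := a⁻¹ • V with hW
  have hWs : W ∈ Metric.sphere (0 : Matrix (Fin m) (Fin n) ℝ) 1 := by
    simp only [hW, Metric.mem_sphere, dist_zero_right, norm_smul, norm_inv, norm_norm]
    rw [Real.norm_eq_abs, abs_of_pos hapos, ← ha, inv_mul_cancel₀ hane]
  have hΦpos : 0 < Φ (M, W) := huv ⟨hMu, hKv hWs⟩
  rw [iteratedFDeriv_two_apply]
  simp only [Matrix.cons_val_zero, Matrix.cons_val_one, Matrix.head_cons]
  have hVW : V = a • W := by rw [hW, smul_inv_smul₀ hane]
  have key : fderiv ℝ (fderiv ℝ F) M V V = a * (a * Φ (M, W)) := by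
    rw [hVW, hΦ]
    simp only [_root_.map_smul, ContinuousLinearMap.smul_apply, smul_eq_mul]
  exact (show 0 < a * (a * Φ (M, W)) by positivity).trans_eq key.symm
end
end

section
/- Let u : Ω ⊂ ℝⁿ → ℝ^m be C² with metric g = I + DuᵀDu. If u satisfies the non-divergence form system √(det g) ∑ g^{ij} ∂ᵢⱼu^α = f^α + (f · ∂ⱼu) ∂ⱼu^α (summed over j) for all α, then u satisfies the inner variation identity ∑ᵢ ∂ᵢ(√(det g) g^{ij}) = −∂ⱼu · f for each j, and hence the divergence form system ∑ᵢ ∂ᵢ(√(det g) g^{ij} ∂ⱼu^α) = f^α. -/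
/-!
Fix a point and write `J = Du`, `g = 1 + JᵀJ`, `B = g⁻¹`, `s = √(det g)`. Jacobi's formula
`∂ᵢ(det g) = det g · tr(B ∂ᵢg)`, the rule `∂ᵢB = -B (∂ᵢg) B`, the formula
`∂ᵢg = (∂ᵢJ)ᵀJ + Jᵀ∂ᵢJ` and the symmetry of second derivatives give
`∑ᵢ ∂ᵢ(s B_{ij}) = -∑_α s h^α (JB)_{αj}` with `h^α = g^{ik} ∂ᵢₖu^α`, i.e. the mean curvature
vector is orthogonal to the tangent vectors `(e_k, ∂_k u)`. The non-divergence system says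
`s h = (1 + JJᵀ) f`, and `(1 + JJᵀ) J = J g`, so the right-hand side is `-(fᵀJ)_j`. The divergence
form then follows from the product rule
`∂ᵢ(s B_{ij} ∂ⱼu^α) = ∂ⱼu^α ∂ᵢ(s B_{ij}) + s B_{ij} ∂ᵢⱼu^α`.
-/

noncomputable section
open Matrix

/-- Partial derivative `∂ᵢφ(x)`. -/
def pd {n : ℕ} (φ : (Fin n → ℝ) → ℝ) (i : Fin n) (x : Fin n → ℝ) : ℝ :=
  fderiv ℝ φ x (Pi.single i 1)

/-- The Jacobian matrix `Du(x)`. -/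
def Jac {n m : ℕ} (u : (Fin n → ℝ) → Fin m → ℝ) (x : Fin n → ℝ) :
    Matrix (Fin m) (Fin n) ℝ :=
  Matrix.of fun α i => fderiv ℝ (fun y => u y α) x (Pi.single i 1)

/-- The induced metric `g = I + DuᵀDu`. -/
def gmet {n m : ℕ} (u : (Fin n → ℝ) → Fin m → ℝ) (x : Fin n → ℝ) :
    Matrix (Fin n) (Fin n) ℝ :=
  1 + (Jac u x)ᵀ * Jac u x

/-- The inverse metric entries `g^{ij}`. -/
def ginv {n m : ℕ} (u : (Fin n → ℝ) → Fin m → ℝ) (x : Fin n → ℝ) (i j : Fin n) : ℝ :=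
  ((gmet u x)⁻¹ : Matrix (Fin n) (Fin n) ℝ) i j

namespace Matrix

section EntryFDeriv

variable {E : Type*} [NormedAddCommGroup E] [NormedSpace ℝ E] {x : E} {ι κ ν : Type*}

def entryFDeriv (G : E → Matrix ι κ ℝ) (x v : E) : Matrix ι κ ℝ :=
  of fun i j => fderiv ℝ (fun y => G y i j) x v

theorem entryFDeriv_const_add (C : Matrix ι κ ℝ) (G : E → Matrix ι κ ℝ) (v : E) :
    entryFDeriv (fun y => C + G y) x v = entryFDeriv G x v := by
  ext i j
  simp only [entryFDeriv, of_apply, add_apply, fderiv_const_add]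

theorem entryFDeriv_transpose (G : E → Matrix ι κ ℝ) (v : E) :
    entryFDeriv (fun y => (G y)ᵀ) x v = (entryFDeriv G x v)ᵀ := rfl

variable [Fintype κ] {G : E → Matrix ι κ ℝ} {H : E → Matrix κ ν ℝ}

theorem differentiableAt_mul_apply (hG : ∀ i j, DifferentiableAt ℝ (fun y => G y i j) x)
    (hH : ∀ i j, DifferentiableAt ℝ (fun y => H y i j) x) (i : ι) (k : ν) :
    DifferentiableAt ℝ (fun y => (G y * H y) i k) x := by
  simp only [mul_apply]
  exact DifferentiableAt.fun_sum fun l _ => (hG i l).mul (hH l k)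

theorem entryFDeriv_mul (hG : ∀ i j, DifferentiableAt ℝ (fun y => G y i j) x)
    (hH : ∀ i j, DifferentiableAt ℝ (fun y => H y i j) x) (v : E) :
    entryFDeriv (fun y => G y * H y) x v = entryFDeriv G x v * H x + G x * entryFDeriv H x v := by
  ext i k
  have hprod : HasFDerivAt (fun y => ∑ l, G y i l * H y l k)
      (∑ l, (G x i l • fderiv ℝ (fun y => H y l k) x + H x l k • fderiv ℝ (fun y => G y i l) x))
      x :=
    HasFDerivAt.fun_sum fun l _ => (hG i l).hasFDerivAt.mul (hH l k).hasFDerivAt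
  simp only [entryFDeriv, of_apply, mul_apply, hprod.fderiv, _root_.sum_apply, _root_.add_apply,
    add_apply, _root_.smul_apply, smul_eq_mul, ← Finset.sum_add_distrib]
  exact Finset.sum_congr rfl fun l _ => by ring

end EntryFDeriv

theorem det_updateRow_eq_sum_adjugate_mul {ι R : Type*} [Fintype ι] [DecidableEq ι] [CommRing R]
    (A : Matrix ι ι R) (i : ι) (b : ι → R) :
    (A.updateRow i b).det = ∑ j, A.adjugate j i * b j := by
  rw [← cramer_transpose_apply, cramer_eq_adjugate_mulVec, ← adjugate_transpose]
  rfl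

section DetInv

variable {E : Type*} [NormedAddCommGroup E] [NormedSpace ℝ E] {x : E}
  {ι : Type*} [Fintype ι] [DecidableEq ι]

theorem hasFDerivAt_det {G : E → Matrix ι ι ℝ} {G' : ι → ι → E →L[ℝ] ℝ}
    (hG : ∀ i j, HasFDerivAt (fun y => G y i j) (G' i j) x) :
    HasFDerivAt (fun y => (G y).det) (∑ i, ∑ j, (G x).adjugate j i • G' i j) x := by
  let D : ContinuousMultilinearMap ℝ (fun _ : ι => ι → ℝ) ℝ :=
    { (detRowAlternating : (ι → ℝ) [⋀^ι]→ₗ[ℝ] ℝ).toMultilinearMap with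
      cont := continuous_id.matrix_det }
  have hrows : HasFDerivAt (fun y => (G y : ι → ι → ℝ))
      (ContinuousLinearMap.pi fun i => ContinuousLinearMap.pi fun j => G' i j) x :=
    hasFDerivAt_pi.2 fun i => hasFDerivAt_pi.2 fun j => hG i j
  refine ((D.hasFDerivAt (G x)).comp x hrows).congr_fderiv ?_
  ext v
  rw [ContinuousLinearMap.comp_apply]
  refine (D.linearDeriv_apply (G x : ι → ι → ℝ) _).trans ?_
  simp only [_root_.sum_apply, _root_.smul_apply, smul_eq_mul]
  refine Finset.sum_congr rfl fun i _ => ?_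
  rw [← det_updateRow_eq_sum_adjugate_mul]
  rfl

variable {G : E → Matrix ι ι ℝ}

theorem differentiableAt_det (hG : ∀ i j, DifferentiableAt ℝ (fun y => G y i j) x) :
    DifferentiableAt ℝ (fun y => (G y).det) x :=
  (hasFDerivAt_det fun i j => (hG i j).hasFDerivAt).differentiableAt

theorem fderiv_det_apply (hG : ∀ i j, DifferentiableAt ℝ (fun y => G y i j) x) (v : E) :
    fderiv ℝ (fun y => (G y).det) x v = ((G x).adjugate * entryFDeriv G x v).trace := by
  rw [(hasFDerivAt_det fun i j => (hG i j).hasFDerivAt).fderiv, Finset.sum_comm]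
  simp [trace, mul_apply, entryFDeriv]

theorem fderiv_sqrt_det_apply (hG : ∀ i j, DifferentiableAt ℝ (fun y => G y i j) x)
    (hx : 0 < (G x).det) (v : E) :
    fderiv ℝ (fun y => √(G y).det) x v
      = √(G x).det / 2 * ((G x)⁻¹ * entryFDeriv G x v).trace := by
  have hadj : (G x).adjugate = (G x).det • (G x)⁻¹ := by
    rw [inv_def, Ring.inverse_eq_inv', smul_smul, mul_inv_cancel₀ hx.ne', one_smul]
  rw [((differentiableAt_det hG).hasFDerivAt.sqrt hx.ne').fderiv, _root_.smul_apply,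
    fderiv_det_apply hG, hadj, smul_mul, trace_smul, smul_eq_mul, smul_eq_mul]
  field_simp
  rw [Real.sq_sqrt hx.le]

theorem differentiableAt_inv_apply (hG : ∀ i j, DifferentiableAt ℝ (fun y => G y i j) x)
    (hx : (G x).det ≠ 0) (i j : ι) : DifferentiableAt ℝ (fun y => (G y)⁻¹ i j) x := by
  have hadj : DifferentiableAt ℝ (fun y => (G y).adjugate i j) x := by
    simp only [adjugate_apply]
    refine differentiableAt_det fun a b => ?_
    simp only [updateRow_apply]
    split_ifs
    · exact differentiableAt_const _
    · exact hG a b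
  simp only [inv_def, Ring.inverse_eq_inv', smul_apply, smul_eq_mul]
  exact ((differentiableAt_det hG).inv hx).mul hadj

theorem entryFDeriv_inv (hG : ∀ i j, DifferentiableAt ℝ (fun y => G y i j) x)
    (hx : (G x).det ≠ 0) (v : E) :
    entryFDeriv (fun y => (G y)⁻¹) x v = -((G x)⁻¹ * entryFDeriv G x v * (G x)⁻¹) := by
  have hone : entryFDeriv (fun y => G y * (G y)⁻¹) x v = 0 := by
    have hloc : ∀ᶠ y in nhds x, G y * (G y)⁻¹ = 1 :=
      ((differentiableAt_det hG).continuousAt.eventually_ne hx).mono fun y hy =>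
        mul_nonsing_inv _ (isUnit_iff_ne_zero.2 hy)
    ext i j
    have hentry : (fun y => (G y * (G y)⁻¹) i j) =ᶠ[nhds x] fun _ => (1 : Matrix ι ι ℝ) i j :=
      hloc.mono fun y hy => congrFun (congrFun hy i) j
    simp [entryFDeriv, hentry.fderiv_eq]
  rw [entryFDeriv_mul hG (differentiableAt_inv_apply hG hx)] at hone
  calc entryFDeriv (fun y => (G y)⁻¹) x v
      = (G x)⁻¹ * (G x * entryFDeriv (fun y => (G y)⁻¹) x v) := by
        rw [← Matrix.mul_assoc, nonsing_inv_mul _ (isUnit_iff_ne_zero.2 hx), Matrix.one_mul]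
    _ = -((G x)⁻¹ * entryFDeriv G x v * (G x)⁻¹) := by
        rw [eq_neg_of_add_eq_zero_right hone, Matrix.mul_neg, Matrix.mul_assoc]

end DetInv

section Algebra

variable {μ ν : Type*} [Fintype μ] [Fintype ν]

theorem sum_mul_trace_eq_sum_mul_apply {R : Type*} [CommSemiring R] (M : ν → Matrix ν ν R)
    (hM : ∀ i a b, M i a b = M b a i) (B : Matrix ν ν R) (j : ν) :
    ∑ i, B i j * (M i).trace = ∑ i, (M i * B) i j := by
  simp only [trace, diag_apply, mul_apply, Finset.mul_sum]
  rw [Finset.sum_comm]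
  exact Finset.sum_congr rfl fun i _ => Finset.sum_congr rfl fun l _ => by rw [hM]; ring

/-- With `g = 1 + JᵀJ`, `B = g⁻¹`, `∂ᵢJ = J' i` and `∂ᵢg = (J' i)ᵀJ + JᵀJ' i`, the summand is
`s⁻¹ ∂ᵢ(s B_{ij})` for `s = √(det g)`. -/
theorem sum_variation_sqrt_det_mul_inv (J : Matrix μ ν ℝ) (J' : ν → Matrix μ ν ℝ)
    (hJ' : ∀ i k α, J' i α k = J' k α i) (B : Matrix ν ν ℝ) (hB : Bᵀ = B) (j : ν) :
    ∑ i, (-(B * ((J' i)ᵀ * J + Jᵀ * J' i) * B) i j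
        + B i j * ((B * ((J' i)ᵀ * J + Jᵀ * J' i)).trace / 2))
      = -∑ α, (∑ i, ∑ k, B i k * J' i α k) * (J * B) α j := by
  have htrace : ∀ i, (B * ((J' i)ᵀ * J)).trace = (B * (Jᵀ * J' i)).trace := fun i => by
    rw [← trace_transpose, transpose_mul, transpose_mul, transpose_transpose, hB,
      trace_mul_comm]
  have hfirst : ∑ i, (B * ((J' i)ᵀ * J) * B) i j
      = ∑ α, (∑ i, ∑ k, B i k * J' i α k) * (J * B) α j := by
    have hassoc : ∀ i, B * ((J' i)ᵀ * J) * B = B * (J' i)ᵀ * (J * B) := fun i => by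
      simp only [Matrix.mul_assoc]
    simp only [hassoc]
    simp only [mul_apply, transpose_apply, Finset.sum_mul]
    exact Finset.sum_comm
  have hsecond : ∑ i, B i j * (B * (Jᵀ * J' i)).trace = ∑ i, (B * (Jᵀ * J' i) * B) i j := by
    refine sum_mul_trace_eq_sum_mul_apply _ (fun i a b => ?_) B j
    simp only [mul_apply, hJ' i b]
  simp only [Matrix.mul_add, Matrix.add_mul, add_apply, trace_add, htrace, add_self_div_two,
    neg_add, Finset.sum_add_distrib, Finset.sum_neg_distrib, hfirst, hsecond]
  ring

variable [DecidableEq ν]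

theorem det_one_add_transpose_mul_self_pos (J : Matrix μ ν ℝ) : 0 < (1 + Jᵀ * J).det := by
  refine (PosDef.one.add_posSemidef ?_).det_pos
  simpa only [conjTranspose_eq_transpose_of_trivial] using posSemidef_conjTranspose_mul_self J

theorem vecMul_mul_inv_one_add_transpose_mul_self (J : Matrix μ ν ℝ) (f : μ → ℝ) :
    (f + f ᵥ* J ᵥ* Jᵀ) ᵥ* (J * (1 + Jᵀ * J)⁻¹) = f ᵥ* J := by
  have hunit : IsUnit (1 + Jᵀ * J).det := (det_one_add_transpose_mul_self_pos J).ne'.isUnit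
  have hJ : J * (1 + Jᵀ * J)⁻¹ + J * (Jᵀ * (J * (1 + Jᵀ * J)⁻¹)) = J := by
    rw [← Matrix.mul_add, ← Matrix.mul_assoc Jᵀ, ← one_add_mul, mul_nonsing_inv _ hunit,
      Matrix.mul_one]
  rw [add_vecMul, vecMul_vecMul, vecMul_vecMul, ← vecMul_add, hJ]

end Algebra

end Matrix

section PartialDeriv

variable {n : ℕ} {x : Fin n → ℝ}

theorem pd_mul {φ ψ : (Fin n → ℝ) → ℝ} (hφ : DifferentiableAt ℝ φ x)
    (hψ : DifferentiableAt ℝ ψ x) (i : Fin n) :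
    pd (fun y => φ y * ψ y) i x = φ x * pd ψ i x + ψ x * pd φ i x := by
  simp only [pd, fderiv_fun_mul hφ hψ, _root_.add_apply, _root_.smul_apply, smul_eq_mul]

theorem pd_sum {ι : Type*} (s : Finset ι) {φ : ι → (Fin n → ℝ) → ℝ}
    (hφ : ∀ a ∈ s, DifferentiableAt ℝ (φ a) x) (i : Fin n) :
    pd (fun y => ∑ a ∈ s, φ a y) i x = ∑ a ∈ s, pd (φ a) i x := by
  simp only [pd, fderiv_fun_sum hφ, _root_.sum_apply]

end PartialDeriv

section Graph

variable {n m : ℕ} {u : (Fin n → ℝ) → Fin m → ℝ} {x : Fin n → ℝ}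

theorem det_gmet_pos (u : (Fin n → ℝ) → Fin m → ℝ) (x : Fin n → ℝ) : 0 < (gmet u x).det :=
  det_one_add_transpose_mul_self_pos _

theorem transpose_inv_gmet (u : (Fin n → ℝ) → Fin m → ℝ) (x : Fin n → ℝ) :
    ((gmet u x)⁻¹)ᵀ = (gmet u x)⁻¹ := by
  rw [transpose_nonsing_inv]
  simp [gmet, transpose_add, transpose_mul]

theorem contDiffAt_fderiv_component (hu : ContDiffAt ℝ 2 u x) (α : Fin m) :
    ContDiffAt ℝ 1 (fderiv ℝ fun y => u y α) x :=
  (contDiffAt_pi.1 hu α).fderiv_right (by norm_num)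

theorem differentiableAt_jac_apply (hu : ContDiffAt ℝ 2 u x) (α : Fin m) (k : Fin n) :
    DifferentiableAt ℝ (fun y => Jac u y α k) x :=
  ((contDiffAt_fderiv_component hu α).differentiableAt one_ne_zero).clm_apply
    (differentiableAt_const _)

theorem entryFDeriv_jac_apply (hu : ContDiffAt ℝ 2 u x) (v : Fin n → ℝ) (α : Fin m) (k : Fin n) :
    entryFDeriv (Jac u) x v α k = fderiv ℝ (fderiv ℝ fun y => u y α) x v (Pi.single k 1) := by
  simp only [entryFDeriv, Jac, of_apply]
  rw [fderiv_clm_apply ((contDiffAt_fderiv_component hu α).differentiableAt one_ne_zero)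
    (differentiableAt_const _)]
  simp

theorem entryFDeriv_jac_single_comm (hu : ContDiffAt ℝ 2 u x) (i k : Fin n) (α : Fin m) :
    entryFDeriv (Jac u) x (Pi.single i 1) α k = entryFDeriv (Jac u) x (Pi.single k 1) α i := by
  rw [entryFDeriv_jac_apply hu, entryFDeriv_jac_apply hu]
  exact (contDiffAt_pi.1 hu α).isSymmSndFDerivAt (by simp) _ _

theorem differentiableAt_gmet_apply (hu : ContDiffAt ℝ 2 u x) (k l : Fin n) :
    DifferentiableAt ℝ (fun y => gmet u y k l) x := by
  simp only [gmet, Matrix.add_apply]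
  exact (differentiableAt_const _).add (differentiableAt_mul_apply
    (fun a b => differentiableAt_jac_apply hu b a) (differentiableAt_jac_apply hu) k l)

theorem entryFDeriv_gmet (hu : ContDiffAt ℝ 2 u x) (v : Fin n → ℝ) :
    entryFDeriv (gmet u) x v
      = (entryFDeriv (Jac u) x v)ᵀ * Jac u x + (Jac u x)ᵀ * entryFDeriv (Jac u) x v := by
  unfold gmet
  rw [entryFDeriv_const_add, entryFDeriv_mul (G := fun y => (Jac u y)ᵀ)
    (fun a b => differentiableAt_jac_apply hu b a) (differentiableAt_jac_apply hu),
    entryFDeriv_transpose]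

theorem sum_pd_sqrt_det_mul_ginv (hu : ContDiffAt ℝ 2 u x) (j : Fin n) :
    ∑ i, pd (fun y => √(gmet u y).det * ginv u y i j) i x
      = -∑ α, (√(gmet u x).det
          * ∑ i, ∑ k, ginv u x i k * pd (fun z => pd (fun y => u y α) k z) i x)
          * (Jac u x * (gmet u x)⁻¹) α j := by
  have hg := differentiableAt_gmet_apply hu
  have hdet := det_gmet_pos u x
  have hterm : ∀ i, pd (fun y => √(gmet u y).det * ginv u y i j) i x
      = √(gmet u x).det
        * (-((gmet u x)⁻¹ * entryFDeriv (gmet u) x (Pi.single i 1) * (gmet u x)⁻¹) i j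
          + (gmet u x)⁻¹ i j
            * (((gmet u x)⁻¹ * entryFDeriv (gmet u) x (Pi.single i 1)).trace / 2)) := by
    intro i
    rw [pd_mul (ψ := fun y => ginv u y i j) ((differentiableAt_det hg).sqrt hdet.ne')
      (differentiableAt_inv_apply hg hdet.ne' i j)]
    change √(gmet u x).det * entryFDeriv (fun y => (gmet u y)⁻¹) x (Pi.single i 1) i j
      + (gmet u x)⁻¹ i j * fderiv ℝ (fun y => √(gmet u y).det) x (Pi.single i 1) = _
    rw [entryFDeriv_inv hg hdet.ne', fderiv_sqrt_det_apply hg hdet, neg_apply]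
    ring
  simp only [hterm, ← Finset.mul_sum, entryFDeriv_gmet hu]
  rw [sum_variation_sqrt_det_mul_inv _ _ (entryFDeriv_jac_single_comm hu) _
    (transpose_inv_gmet u x), mul_neg, Finset.mul_sum]
  simp only [mul_assoc]
  rfl

theorem sum_pd_sqrt_det_mul_ginv_mul_pd (hu : ContDiffAt ℝ 2 u x) (α : Fin m) :
    ∑ i, pd (fun y => √(gmet u y).det * ∑ j, ginv u y i j * pd (fun z => u z α) j y) i x
      = ∑ j, pd (fun z => u z α) j x * ∑ i, pd (fun y => √(gmet u y).det * ginv u y i j) i x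
        + √(gmet u x).det * ∑ i, ∑ j, ginv u x i j * pd (fun z => pd (fun y => u y α) j z) i x := by
  have hg := differentiableAt_gmet_apply hu
  have hdet := det_gmet_pos u x
  have hcoeff : ∀ i j, DifferentiableAt ℝ (fun y => √(gmet u y).det * ginv u y i j) x :=
    fun i j => ((differentiableAt_det hg).sqrt hdet.ne').mul
      (differentiableAt_inv_apply hg hdet.ne' i j)
  have hdu : ∀ j, DifferentiableAt ℝ (fun y => pd (fun z => u z α) j y) x :=
    differentiableAt_jac_apply hu α
  have hterm : ∀ i, pd (fun y => √(gmet u y).det * ∑ j, ginv u y i j * pd (fun z => u z α) j y) i x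
      = ∑ j, (√(gmet u x).det * ginv u x i j * pd (fun z => pd (fun y => u y α) j z) i x
          + pd (fun z => u z α) j x * pd (fun y => √(gmet u y).det * ginv u y i j) i x) := by
    intro i
    simp only [Finset.mul_sum, ← mul_assoc]
    rw [pd_sum _ fun j _ => (hcoeff i j).fun_mul (hdu j)]
    exact Finset.sum_congr rfl fun j _ => pd_mul (hcoeff i j) (hdu j) i
  rw [Finset.sum_congr rfl fun i _ => hterm i]
  simp only [Finset.sum_add_distrib, Finset.mul_sum, mul_assoc]
  rw [add_comm, Finset.sum_comm]

end Graph

theorem nondivergence_implies_inner_and_divergence_general {n m : ℕ}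
    (Ω : Set (Fin n → ℝ)) (hΩ : IsOpen Ω)
    (u : (Fin n → ℝ) → Fin m → ℝ) (hu : ContDiffOn ℝ 2 u Ω)
    (f : (Fin n → ℝ) → Fin m → ℝ)
    (hnondiv : ∀ x ∈ Ω, ∀ α : Fin m,
      Real.sqrt (gmet u x).det *
          ∑ i, ∑ j, ginv u x i j * pd (fun z => pd (fun y => u y α) j z) i x
        = f x α + ∑ j, (∑ β, f x β * pd (fun z => u z β) j x) * pd (fun z => u z α) j x) :
    (∀ x ∈ Ω, ∀ j : Fin n,
      ∑ i, pd (fun y => Real.sqrt (gmet u y).det * ginv u y i j) i x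
        = -∑ α, pd (fun z => u z α) j x * f x α) ∧
    (∀ x ∈ Ω, ∀ α : Fin m,
      ∑ i, pd (fun y =>
          Real.sqrt (gmet u y).det * ∑ j, ginv u y i j * pd (fun z => u z α) j y) i x
        = f x α) := by
  have hu' : ∀ x ∈ Ω, ContDiffAt ℝ 2 u x := fun x hx => hu.contDiffAt (hΩ.mem_nhds hx)
  have inner : ∀ x ∈ Ω, ∀ j : Fin n,
      ∑ i, pd (fun y => Real.sqrt (gmet u y).det * ginv u y i j) i x
        = -∑ α, pd (fun z => u z α) j x * f x α := by
    intro x hx j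
    rw [sum_pd_sqrt_det_mul_ginv (hu' x hx), neg_inj]
    simp only [hnondiv x hx]
    calc _ = ∑ α, f x α * Jac u x α j :=
          congrFun (vecMul_mul_inv_one_add_transpose_mul_self (Jac u x) (f x)) j
      _ = _ := Finset.sum_congr rfl fun α _ => mul_comm _ _
  refine ⟨inner, fun x hx α => ?_⟩
  have hswap : ∀ j, pd (fun z => u z α) j x * ∑ β, pd (fun z => u z β) j x * f x β
      = (∑ β, f x β * pd (fun z => u z β) j x) * pd (fun z => u z α) j x := fun j => by
    rw [mul_comm]
    simp only [mul_comm (f x _)]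
  rw [sum_pd_sqrt_det_mul_ginv_mul_pd (hu' x hx), hnondiv x hx α]
  simp only [inner x hx, mul_neg, Finset.sum_neg_distrib, hswap]
  ring

/-- if a `C²` map `u` satisfies the non-divergence form system
`√(det g) ∑ g^{ij} ∂ᵢⱼu^α = f^α + ∑ⱼ (f·∂ⱼu) ∂ⱼu^α`, then it satisfies the inner
variation identity `∑ᵢ ∂ᵢ(√(det g) g^{ij}) = −∂ⱼu·f`, and hence the divergence form
system `∑ᵢ ∂ᵢ(√(det g) g^{ij} ∂ⱼu^α) = f^α`. -/
theorem nondivergence_implies_inner_and_divergence {n m : ℕ}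
    (Ω : Set (Fin n → ℝ)) (hΩ : IsOpen Ω)
    (u : (Fin n → ℝ) → Fin m → ℝ) (hu : ContDiffOn ℝ 2 u Ω)
    (f : (Fin n → ℝ) → Fin m → ℝ) (hf : ContinuousOn f Ω)
    (hnondiv : ∀ x ∈ Ω, ∀ α : Fin m,
      Real.sqrt (gmet u x).det *
          ∑ i, ∑ j, ginv u x i j * pd (fun z => pd (fun y => u y α) j z) i x
        = f x α + ∑ j, (∑ β, f x β * pd (fun z => u z β) j x) * pd (fun z => u z α) j x) :
    (∀ x ∈ Ω, ∀ j : Fin n,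
      ∑ i, pd (fun y => Real.sqrt (gmet u y).det * ginv u y i j) i x
        = -∑ α, pd (fun z => u z α) j x * f x α) ∧
    (∀ x ∈ Ω, ∀ α : Fin m,
      ∑ i, pd (fun y =>
          Real.sqrt (gmet u y).det * ∑ j, ginv u y i j * pd (fun z => u z α) j y) i x
        = f x α) :=
  nondivergence_implies_inner_and_divergence_general Ω hΩ u hu f hnondiv
end
end
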